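/- Let λ ∈ (1/2, 1), β = 1/λ, and define F_β on I_λ \ C_λ (where I_λ = [0, λ/(1−λ)] and C_λ = [λ, λ²/(1−λ)]) by F_β(x) = βx for x ∈ [0,λ) and F_β(x) = βx − 1 for x ∈ (λ²/(1−λ), λ/(1−λ)]. If i, j are sequences in {0,1}^ℕ whose full forward F_β-orbits are defined (i.e. Π_λ(σ^n i), Π_λ(σ^n j) ∉ C_λ for all n ≥ 0, with digits given by the symbolic dynamics of F_β), then |Π_λ(i) − Π_λ(j)| ≥ |C_λ|·λ^{|i∧j|}, where |C_λ| = λ(2λ−1)/(1−λ). Consequently Π_λ restricted to the set of unique expansions is bi-Lipschitz from the metric ϱ(i,j) = λ^{|i∧j|} to the Euclidean metric. -/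

import Mathlib

/-!
Two sequences agreeing on their first `n` digits satisfy
`Π_λ(i) - Π_λ(j) = λ^n (Π_λ(σ^n i) - Π_λ(σ^n j))`. At time `n` the digits differ, so one
orbit point lies in `[0, λ)` and the other in `(λ²/(1-λ), λ/(1-λ)]`: their distance is at
least the length `λ²/(1-λ) - λ = λ(2λ-1)/(1-λ)` of the hole `C_λ` and at most the length
`λ/(1-λ)` of `I_λ`.
-/

noncomputable section

def binSeq (i : ℕ → ℕ) : Prop := ∀ n, i n ≤ 1

def piL (l : ℝ) (i : ℕ → ℕ) : ℝ := ∑' n : ℕ, (i n : ℝ) * l ^ (n + 1)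

def shiftN (i : ℕ → ℕ) (n : ℕ) : ℕ → ℕ := fun m => i (m + n)

/-- The full forward `F_β`-orbit of `Π_λ(i)` is defined, with symbolic dynamics given
by the digits of `i`: at each time the orbit point `Π_λ(σ^n i)` lies in `[0,λ)` if the
current digit is 0, and in `(λ²/(1-λ), λ/(1-λ)]` if it is 1 (so it avoids `C_λ`). -/
def goodOrbit (l : ℝ) (i : ℕ → ℕ) : Prop :=
  binSeq i ∧ ∀ n : ℕ,
    (i n = 0 → piL l (shiftN i n) < l) ∧
    (i n = 1 → piL l (shiftN i n) > l ^ 2 / (1 - l))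

theorem binSeq.shiftN {f : ℕ → ℕ} (hf : binSeq f) (n : ℕ) : binSeq (shiftN f n) :=
  fun m => hf (m + n)

theorem summable_digit_mul_pow {l : ℝ} (hl0 : 0 ≤ l) (hl1 : l < 1) {f : ℕ → ℕ}
    (hf : binSeq f) : Summable fun n => (f n : ℝ) * l ^ (n + 1) := by
  refine Summable.of_nonneg_of_le (fun n => by positivity) (fun n => ?_)
    ((summable_geometric_of_lt_one hl0 hl1).mul_left l)
  rw [pow_succ']
  exact mul_le_of_le_one_left (by positivity) (by exact_mod_cast hf n)

theorem piL_nonneg {l : ℝ} (hl0 : 0 ≤ l) (f : ℕ → ℕ) : 0 ≤ piL l f :=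
  tsum_nonneg fun n => by positivity

theorem piL_le {l : ℝ} (hl0 : 0 ≤ l) (hl1 : l < 1) {f : ℕ → ℕ} (hf : binSeq f) :
    piL l f ≤ l / (1 - l) :=
  calc piL l f ≤ ∑' n : ℕ, l * l ^ n :=
        Summable.tsum_le_tsum
          (fun n => by
            rw [← pow_succ']
            exact mul_le_of_le_one_left (by positivity) (by exact_mod_cast hf n))
          (summable_digit_mul_pow hl0 hl1 hf)
          ((summable_geometric_of_lt_one hl0 hl1).mul_left l)
    _ = l / (1 - l) := by rw [tsum_mul_left, tsum_geometric_of_lt_one hl0 hl1, div_eq_mul_inv]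

theorem piL_shiftN_eq {l : ℝ} (hl0 : 0 ≤ l) (hl1 : l < 1) {f : ℕ → ℕ} (hf : binSeq f)
    (n : ℕ) : piL l (shiftN f n) = f n * l + l * piL l (shiftN f (n + 1)) := by
  have hs := summable_digit_mul_pow hl0 hl1 (hf.shiftN n)
  rw [piL, hs.tsum_eq_zero_add, piL, ← tsum_mul_left]
  simp only [shiftN, zero_add, pow_one]
  congr 1
  refine tsum_congr fun m => ?_
  rw [show m + 1 + n = m + (n + 1) by omega]
  ring

theorem piL_sub_eq_pow_mul_of_agree {l : ℝ} (hl0 : 0 ≤ l) (hl1 : l < 1) {i j : ℕ → ℕ}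
    (hi : binSeq i) (hj : binSeq j) {n : ℕ} (hagree : ∀ m < n, i m = j m) :
    piL l i - piL l j = l ^ n * (piL l (shiftN i n) - piL l (shiftN j n)) := by
  induction n with
  | zero => rw [pow_zero, one_mul]; rfl
  | succ n ih =>
    rw [ih fun m hm => hagree m (by omega), piL_shiftN_eq hl0 hl1 hi,
      piL_shiftN_eq hl0 hl1 hj, hagree n n.lt_succ_self]
    ring

theorem hole_length_le_abs_sub {l a b : ℝ} (hl1 : l < 1) (ha : a < l)
    (hb : l ^ 2 / (1 - l) < b) : l * (2 * l - 1) / (1 - l) ≤ |b - a| := by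
  have hC : l * (2 * l - 1) / (1 - l) = l ^ 2 / (1 - l) - l := by
    field_simp [(sub_pos.2 hl1).ne']
    ring
  linarith [le_abs_self (b - a)]

theorem goodOrbit.hole_length_le_abs_sub_of_ne {l : ℝ} (hl1 : l < 1) {i j : ℕ → ℕ}
    (hi : goodOrbit l i) (hj : goodOrbit l j) {n : ℕ} (hne : i n ≠ j n) :
    l * (2 * l - 1) / (1 - l) ≤ |piL l (shiftN i n) - piL l (shiftN j n)| := by
  rcases Nat.le_one_iff_eq_zero_or_eq_one.1 (hi.1 n) with hi0 | hi1 <;>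
    rcases Nat.le_one_iff_eq_zero_or_eq_one.1 (hj.1 n) with hj0 | hj1
  · exact absurd (hi0.trans hj0.symm) hne
  · rw [abs_sub_comm]
    exact hole_length_le_abs_sub hl1 ((hi.2 n).1 hi0) ((hj.2 n).2 hj1)
  · exact hole_length_le_abs_sub hl1 ((hj.2 n).1 hj0) ((hi.2 n).2 hi1)
  · exact absurd (hi1.trans hj1.symm) hne

theorem abs_piL_sub_le {l : ℝ} (hl0 : 0 ≤ l) (hl1 : l < 1) {f g : ℕ → ℕ} (hf : binSeq f)
    (hg : binSeq g) : |piL l f - piL l g| ≤ l / (1 - l) :=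
  abs_sub_le_of_nonneg_of_le (piL_nonneg hl0 f) (piL_le hl0 hl1 hf) (piL_nonneg hl0 g)
    (piL_le hl0 hl1 hg)

theorem stmt5 (l : ℝ) (hl0 : 1 / 2 < l) (hl1 : l < 1)
    (i j : ℕ → ℕ) (hi : goodOrbit l i) (hj : goodOrbit l j) :
    ∀ n : ℕ, (∀ m < n, i m = j m) → i n ≠ j n →
      l * (2 * l - 1) / (1 - l) * l ^ n ≤ |piL l i - piL l j| ∧
      |piL l i - piL l j| ≤ l / (1 - l) * l ^ n := by
  intro n hagree hne
  have hl : 0 ≤ l := by linarith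
  have hlow := hi.hole_length_le_abs_sub_of_ne hl1 hj hne
  have hup := abs_piL_sub_le hl hl1 (hi.1.shiftN n) (hj.1.shiftN n)
  have hpow : 0 ≤ l ^ n := pow_nonneg hl n
  rw [piL_sub_eq_pow_mul_of_agree hl hl1 hi.1 hj.1 hagree, abs_mul, abs_of_nonneg hpow,
    mul_comm (l ^ n)]
  exact ⟨mul_le_mul_of_nonneg_right hlow hpow, mul_le_mul_of_nonneg_right hup hpow⟩
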